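/- arXiv:0709.0987 — 2 statements merged into one kernel-verified Lean document; each statement's English description precedes it below -/
import Mathlib

section
/- The moments satisfy μ_{2n}(c) = Σ_M c^{r(M)} where the sum is over all complete matchings M of {1,…,2n} and r(M) is the number of edges of M that have no right crossing. -/
open Finset Polynomial

attribute [local instance] Classical.propDecidable

/-- Sum of weights of lattice paths of length `n` from height `h` down to height `0`,
with steps `(1,1)` (weight 1) and `(1,-1)` (weight `j-1+c` when leaving height `j`),
staying weakly above the x-axis. -/
def pathsum (c : ℝ) : ℕ → ℕ → ℝ
  | 0, 0 => 1
  | 0, _ + 1 => 0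
  | n + 1, 0 => pathsum c n 1
  | n + 1, h + 1 => pathsum c n (h + 2) + ((h : ℝ) + c) * pathsum c n h

/-- The `n`-th moment of the associated Hermite polynomials. -/
def mu (c : ℝ) (n : ℕ) : ℝ := pathsum c n 0

/-- `M` is a complete matching of `{1,…,2n}`: each pair `(a,b)` has `a < b`
and every vertex in `{1,…,2n}` lies in exactly one pair. -/
def IsCompleteMatching (n : ℕ) (M : Finset (ℕ × ℕ)) : Prop :=
  (∀ p ∈ M, p.1 < p.2 ∧ 1 ≤ p.1 ∧ p.2 ≤ 2 * n) ∧
  (∀ v, 1 ≤ v → v ≤ 2 * n → ∃! p : ℕ × ℕ, p ∈ M ∧ (p.1 = v ∨ p.2 = v))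

/-- The finite set of all complete matchings of `{1,…,2n}`. -/
noncomputable def matchings (n : ℕ) : Finset (Finset (ℕ × ℕ)) :=
  ((Finset.Icc 1 (2 * n) ×ˢ Finset.Icc 1 (2 * n)).powerset).filter (IsCompleteMatching n)

/-- Edge `p = {a,b}` (a<b) is nested by edge `q = {a',b'}` (a'<b') if `a' < a < b < b'`. -/
def NestedBy (p q : ℕ × ℕ) : Prop := q.1 < p.1 ∧ p.2 < q.2

/-- The number of edges of `M` nested by no other edge of `M`. -/
noncomputable def nonnestedCount (M : Finset (ℕ × ℕ)) : ℕ :=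
  (M.filter (fun p => ∀ q ∈ M, ¬ NestedBy p q)).card

/-- Edge `p = {a,b}` (a<b) has a right crossing from `q = {a',b'}` (a'<b') if `a < a' < b < b'`. -/
def RightCrossing (p q : ℕ × ℕ) : Prop := p.1 < q.1 ∧ q.1 < p.2 ∧ p.2 < q.2

/-- The number of edges of `M` having no right crossing. -/
noncomputable def noRightCrossingCount (M : Finset (ℕ × ℕ)) : ℕ :=
  (M.filter (fun p => ∀ q ∈ M, ¬ RightCrossing p q)).card

/-!
Read a matching from left to right. After position `t` the arcs opened but not yet closed have
left endpoints forming a set `O`, and position `t + 1` either opens a new arc or closes one of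
the `#O` open ones. A closed arc `(a, t + 1)` has a right crossing exactly when an arc opened
after `a` is still open, so only closing the most recently opened arc contributes a factor `c`,
and the total weight of the closing step is `#O - 1 + c`. The weighted count of completions
therefore obeys the recursion of `pathsum`, with `#O` as the height.
-/

section PerfectMatchingOn

def IsPerfectMatchingOn (V : Finset ℕ) (M : Finset (ℕ × ℕ)) : Prop :=
  (∀ p ∈ M, p.1 < p.2 ∧ p.1 ∈ V ∧ p.2 ∈ V) ∧ ∀ v ∈ V, ∃! p, p ∈ M ∧ (p.1 = v ∨ p.2 = v)

variable {V : Finset ℕ} {M : Finset (ℕ × ℕ)}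

lemma IsPerfectMatchingOn.mem_of_endpoint (hM : IsPerfectMatchingOn V M) {p : ℕ × ℕ}
    (hp : p ∈ M) {v : ℕ} (hv : p.1 = v ∨ p.2 = v) : v ∈ V := by
  rcases hv with rfl | rfl
  exacts [(hM.1 p hp).2.1, (hM.1 p hp).2.2]

lemma IsPerfectMatchingOn.eq_of_endpoint (hM : IsPerfectMatchingOn V M) {p q : ℕ × ℕ}
    (hp : p ∈ M) (hq : q ∈ M) {v : ℕ} (hpv : p.1 = v ∨ p.2 = v) (hqv : q.1 = v ∨ q.2 = v) :
    q = p :=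
  (hM.2 v (hM.mem_of_endpoint hp hpv)).unique ⟨hq, hqv⟩ ⟨hp, hpv⟩

lemma IsPerfectMatchingOn.erase (hM : IsPerfectMatchingOn V M) {p : ℕ × ℕ} (hp : p ∈ M) :
    IsPerfectMatchingOn ((V.erase p.1).erase p.2) (M.erase p) := by
  refine ⟨fun q hq => ?_, fun v hv => ?_⟩
  · obtain ⟨hqp, hqM⟩ := mem_erase.1 hq
    have hdisj : ∀ v, (q.1 = v ∨ q.2 = v) → v ≠ p.1 ∧ v ≠ p.2 := fun v hv =>
      ⟨fun h => hqp (hM.eq_of_endpoint hp hqM (Or.inl h.symm) hv),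
        fun h => hqp (hM.eq_of_endpoint hp hqM (Or.inr h.symm) hv)⟩
    obtain ⟨hlt, h1, h2⟩ := hM.1 q hqM
    simp only [mem_erase]
    exact ⟨hlt, ⟨(hdisj _ (Or.inl rfl)).2, (hdisj _ (Or.inl rfl)).1, h1⟩,
      ⟨(hdisj _ (Or.inr rfl)).2, (hdisj _ (Or.inr rfl)).1, h2⟩⟩
  · obtain ⟨hv2, hv1, hvV⟩ : v ≠ p.2 ∧ v ≠ p.1 ∧ v ∈ V := by simpa only [mem_erase] using hv
    obtain ⟨q, ⟨hqM, hqv⟩, huniq⟩ := hM.2 v hvV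
    have hqp : q ≠ p := by
      rintro rfl
      rcases hqv with h | h <;> simp_all
    exact ⟨q, ⟨mem_erase.2 ⟨hqp, hqM⟩, hqv⟩,
      fun r ⟨hr, hrv⟩ => huniq r ⟨mem_of_mem_erase hr, hrv⟩⟩

lemma IsPerfectMatchingOn.insert (hM : IsPerfectMatchingOn V M) {a b : ℕ} (hab : a < b)
    (ha : a ∉ V) (hb : b ∉ V) : IsPerfectMatchingOn (insert a (insert b V)) (insert (a, b) M) := by
  refine ⟨?_, fun v hv => ?_⟩
  · simp only [forall_mem_insert]
    refine ⟨⟨hab, by simp, by simp⟩, fun q hq => ?_⟩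
    obtain ⟨hlt, h1, h2⟩ := hM.1 q hq
    exact ⟨hlt, by simp [h1], by simp [h2]⟩
  · by_cases hvV : v ∈ V
    · obtain ⟨q, ⟨hqM, hqv⟩, huniq⟩ := hM.2 v hvV
      refine ⟨q, ⟨mem_insert_of_mem hqM, hqv⟩, fun r ⟨hr, hrv⟩ => ?_⟩
      rcases mem_insert.1 hr with rfl | hr
      · rcases hrv with rfl | rfl <;> contradiction
      · exact huniq r ⟨hr, hrv⟩
    · have hnew : v = a ∨ v = b := by simpa [hvV] using hv
      refine ⟨(a, b), ⟨mem_insert_self _ _, hnew.imp Eq.symm Eq.symm⟩, fun r ⟨hr, hrv⟩ => ?_⟩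
      rcases mem_insert.1 hr with rfl | hr
      · rfl
      · exact absurd (hM.mem_of_endpoint hr hrv) hvV

end PerfectMatchingOn

lemma noRightCrossingCount_insert {M : Finset (ℕ × ℕ)} {e : ℕ × ℕ} (he : e ∉ M)
    (hM : ∀ p ∈ M, ¬ RightCrossing p e) :
    noRightCrossingCount (insert e M) =
      noRightCrossingCount M + if ∀ q ∈ M, ¬ RightCrossing e q then 1 else 0 := by
  have hold : ∀ p ∈ M,
      (∀ q ∈ insert e M, ¬ RightCrossing p q) ↔ ∀ q ∈ M, ¬ RightCrossing p q := by
    intro p hp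
    simp only [forall_mem_insert, hM p hp, not_false_eq_true, true_and]
  have hnew : (∀ q ∈ insert e M, ¬ RightCrossing e q) ↔ ∀ q ∈ M, ¬ RightCrossing e q := by
    simp only [forall_mem_insert, and_iff_right_iff_imp]
    exact fun _ h => lt_irrefl _ h.1
  unfold noRightCrossingCount
  rw [filter_insert, filter_congr hold]
  by_cases he_free : ∀ q ∈ M, ¬ RightCrossing e q
  · rw [if_pos (hnew.2 he_free), if_pos he_free,
      card_insert_of_notMem fun h => he (mem_filter.1 h).1]
  · rw [if_neg (mt hnew.1 he_free), if_neg he_free, add_zero]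

lemma sum_ite_forall_le {α R : Type*} [LinearOrder α] [AddCommMonoidWithOne R] {s : Finset α}
    [DecidablePred fun a => ∀ x ∈ s, x ≤ a] (hs : s.Nonempty) (c : R) :
    ∑ a ∈ s, (if ∀ x ∈ s, x ≤ a then c else 1) = c + ((#s - 1 : ℕ) : R) := by
  rw [← add_sum_erase s _ (max'_mem s hs), if_pos fun x hx => le_max' s x hx]
  congr 1
  have hnot_max : ∀ a ∈ s.erase (s.max' hs), ¬ ∀ x ∈ s, x ≤ a := fun a ha h =>
    (mem_erase.1 ha).1 (le_antisymm (le_max' s a (mem_of_mem_erase ha)) (h _ (max'_mem s hs)))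
  rw [sum_congr rfl fun a ha => if_neg (hnot_max a ha), sum_const, card_erase_of_mem
    (max'_mem s hs), nsmul_one]

/-- The part of a complete matching still to be read after position `t`, when `O` holds the left
endpoints of the arcs left open. -/
def IsCompletion (t m : ℕ) (O : Finset ℕ) (M : Finset (ℕ × ℕ)) : Prop :=
  IsPerfectMatchingOn (O ∪ Icc (t + 1) (t + m)) M ∧ ∀ p ∈ M, t < p.2

noncomputable def completions (t m : ℕ) (O : Finset ℕ) : Finset (Finset (ℕ × ℕ)) :=
  let V := O ∪ Icc (t + 1) (t + m)
  ((V ×ˢ V).powerset).filter (IsCompletion t m O)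

lemma mem_completions {t m : ℕ} {O : Finset ℕ} {M : Finset (ℕ × ℕ)} :
    M ∈ completions t m O ↔ IsCompletion t m O M := by
  refine ⟨fun h => (mem_filter.1 h).2, fun h => mem_filter.2 ⟨mem_powerset.2 fun p hp => ?_, h⟩⟩
  obtain ⟨-, h1, h2⟩ := h.1.1 p hp
  exact mem_product.2 ⟨h1, h2⟩

lemma matchings_eq_completions (n : ℕ) : matchings n = completions 0 (2 * n) ∅ := by
  have hV : (∅ : Finset ℕ) ∪ Icc (0 + 1) (0 + 2 * n) = Icc 1 (2 * n) := by simp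
  simp only [matchings, completions, hV]
  refine filter_congr fun M _ => ?_
  simp only [IsCompleteMatching, IsCompletion, IsPerfectMatchingOn, hV, mem_Icc]
  constructor
  · rintro ⟨harc, hcov⟩
    refine ⟨⟨fun p hp => ?_, fun v hv => hcov v hv.1 hv.2⟩, fun p hp => ?_⟩
    all_goals have := harc p hp; omega
  · rintro ⟨⟨harc, hcov⟩, -⟩
    refine ⟨fun p hp => ?_, fun v h1 h2 => hcov v ⟨h1, h2⟩⟩
    have := harc p hp; omega

section Completion

variable {t m : ℕ} {O : Finset ℕ} {M : Finset (ℕ × ℕ)}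

lemma insert_union_Icc_succ :
    insert (t + 1) O ∪ Icc (t + 1 + 1) (t + 1 + m) = O ∪ Icc (t + 1) (t + (m + 1)) := by
  ext x
  by_cases hx : x ∈ O <;> simp [hx]
  omega

lemma erase_erase_union_Icc_succ (hO : ∀ x ∈ O, x ≤ t) {a : ℕ} (ha : a ∈ O) :
    ((O ∪ Icc (t + 1) (t + (m + 1))).erase a).erase (t + 1) =
      O.erase a ∪ Icc (t + 1 + 1) (t + 1 + m) := by
  have hat := hO a ha
  ext x
  have := hO x
  by_cases hx : x ∈ O <;> simp [hx] at this ⊢ <;> omega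

lemma IsCompletion.of_open_succ (hM : IsCompletion (t + 1) m (insert (t + 1) O) M) :
    IsCompletion t (m + 1) O M :=
  ⟨insert_union_Icc_succ ▸ hM.1, fun p hp => Nat.lt_of_succ_lt (hM.2 p hp)⟩

lemma IsCompletion.open_succ (hM : IsCompletion t (m + 1) O M) {p : ℕ × ℕ} (hp : p ∈ M)
    (hp1 : p.1 = t + 1) : IsCompletion (t + 1) m (insert (t + 1) O) M := by
  refine ⟨insert_union_Icc_succ ▸ hM.1, fun q hq => ?_⟩
  have hq2 : q.2 ≠ t + 1 := fun hq2 => by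
    have hqp := hM.1.eq_of_endpoint hp hq (Or.inl hp1) (Or.inr hq2)
    have := (hM.1.1 q hq).1
    rw [hqp] at this hq2
    omega
  have := hM.2 q hq
  omega

lemma IsCompletion.of_close_succ (hO : ∀ x ∈ O, x ≤ t) {a : ℕ} (ha : a ∈ O)
    (hM : IsCompletion (t + 1) m (O.erase a) M) :
    IsCompletion t (m + 1) O (insert (a, t + 1) M) := by
  have hat := hO a ha
  have hV : insert a (insert (t + 1) (O.erase a ∪ Icc (t + 1 + 1) (t + 1 + m))) =
      O ∪ Icc (t + 1) (t + (m + 1)) := by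
    rw [← erase_erase_union_Icc_succ hO ha, insert_erase (by simp; omega),
      insert_erase (mem_union_left _ ha)]
  have hfresh : ∀ x ∈ O.erase a ∪ Icc (t + 1 + 1) (t + 1 + m), x ≠ a ∧ x ≠ t + 1 := by
    intro x hx
    rcases mem_union.1 hx with hx | hx
    · exact ⟨(mem_erase.1 hx).1, by have := hO x (mem_of_mem_erase hx); omega⟩
    · rw [mem_Icc] at hx; omega
  refine ⟨hV ▸ hM.1.insert (Nat.lt_succ_of_le hat) (fun h => (hfresh a h).1 rfl)
    (fun h => (hfresh _ h).2 rfl), ?_⟩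
  simp only [forall_mem_insert]
  exact ⟨Nat.lt_succ_self t, fun q hq => Nat.lt_of_succ_lt (hM.2 q hq)⟩

lemma IsCompletion.close_succ (hO : ∀ x ∈ O, x ≤ t) (hM : IsCompletion t (m + 1) O M)
    {p : ℕ × ℕ} (hp : p ∈ M) (hp2 : p.2 = t + 1) :
    p.1 ∈ O ∧ IsCompletion (t + 1) m (O.erase p.1) (M.erase p) := by
  obtain ⟨hlt, hp1, -⟩ := hM.1.1 p hp
  have hpO : p.1 ∈ O := by
    rcases mem_union.1 hp1 with h | h
    · exact h
    · rw [mem_Icc] at h; omega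
  have hV := erase_erase_union_Icc_succ (m := m) hO hpO
  have hM' := hM.1.erase hp
  rw [hp2, hV] at hM'
  refine ⟨hpO, hM', fun q hq => ?_⟩
  have hqt := hM.2 q (mem_of_mem_erase hq)
  rcases mem_union.1 (hM'.1 q hq).2.2 with h | h
  · have := hO _ (mem_of_mem_erase h); omega
  · rw [mem_Icc] at h; omega

lemma IsCompletion.notMem_pair (hM : IsCompletion t m O M) (a : ℕ) : (a, t) ∉ M :=
  fun h => (hM.2 _ h).false

lemma isCompletion_zero_iff (hO : ∀ x ∈ O, x ≤ t) : IsCompletion t 0 O M ↔ O = ∅ ∧ M = ∅ := by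
  constructor
  · intro hM
    have hM_empty : M = ∅ := eq_empty_of_forall_notMem fun p hp => by
      have := hM.2 p hp
      rcases mem_union.1 (hM.1.1 p hp).2.2 with h | h
      · have := hO _ h; omega
      · rw [mem_Icc] at h; omega
    refine ⟨eq_empty_of_forall_notMem fun x hx => ?_, hM_empty⟩
    obtain ⟨p, ⟨hp, -⟩, -⟩ := hM.1.2 x (mem_union_left _ hx)
    simp [hM_empty] at hp
  · rintro ⟨rfl, rfl⟩
    refine ⟨⟨by simp, fun v hv => ?_⟩, by simp⟩
    simp at hv

lemma completions_zero (hO : ∀ x ∈ O, x ≤ t) :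
    completions t 0 O = if O = ∅ then {∅} else ∅ := by
  ext M
  rw [mem_completions, isCompletion_zero_iff hO]
  split_ifs with h <;> simp [h]

lemma completions_succ (hO : ∀ x ∈ O, x ≤ t) :
    completions t (m + 1) O = completions (t + 1) m (insert (t + 1) O) ∪
      O.biUnion fun a => (completions (t + 1) m (O.erase a)).image (insert (a, t + 1)) := by
  ext M
  simp only [mem_union, mem_biUnion, mem_image, mem_completions]
  constructor
  · intro hM
    obtain ⟨p, ⟨hp, hpt⟩, -⟩ := hM.1.2 (t + 1) (by simp)
    rcases hpt with hp1 | hp2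
    · exact Or.inl (hM.open_succ hp hp1)
    · obtain ⟨hpO, hM'⟩ := hM.close_succ hO hp hp2
      refine Or.inr ⟨p.1, hpO, M.erase p, hM', ?_⟩
      rw [← hp2, insert_erase hp]
  · rintro (hM | ⟨a, ha, M', hM', rfl⟩)
    exacts [hM.of_open_succ, hM'.of_close_succ hO ha]

lemma sum_completions_succ {R : Type*} [AddCommMonoid R] (f : Finset (ℕ × ℕ) → R)
    (hO : ∀ x ∈ O, x ≤ t) :
    ∑ M ∈ completions t (m + 1) O, f M =
      ∑ M ∈ completions (t + 1) m (insert (t + 1) O), f M +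
        ∑ a ∈ O, ∑ M ∈ completions (t + 1) m (O.erase a), f (insert (a, t + 1) M) := by
  have hopen_close : Disjoint (completions (t + 1) m (insert (t + 1) O))
      (O.biUnion fun a => (completions (t + 1) m (O.erase a)).image (insert (a, t + 1))) := by
    simp only [disjoint_left, mem_biUnion, mem_image, mem_completions, not_exists, not_and]
    rintro _ hM a - M' - rfl
    exact hM.notMem_pair a (mem_insert_self _ _)
  have hclose : (O : Set ℕ).PairwiseDisjoint
      fun a => (completions (t + 1) m (O.erase a)).image (insert (a, t + 1)) := by
    intro a _ b _ hab
    simp only [Function.onFun, disjoint_left, mem_image, mem_completions, not_exists, not_and]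
    rintro _ ⟨M, hM, rfl⟩ M' hM' h
    have hb : (b, t + 1) ∈ insert (a, t + 1) M := h ▸ mem_insert_self _ _
    rcases mem_insert.1 hb with hba | hb
    exacts [hab (congrArg Prod.fst hba).symm, hM.notMem_pair b hb]
  rw [completions_succ hO, sum_union hopen_close, sum_biUnion hclose]
  refine congrArg _ (sum_congr rfl fun a _ => sum_image fun M hM M' hM' h => ?_)
  rw [mem_coe, mem_completions] at hM hM'
  rw [← erase_insert (hM.notMem_pair a), h, erase_insert (hM'.notMem_pair a)]

lemma IsCompletion.forall_not_rightCrossing_iff (hO : ∀ x ∈ O, x ≤ t) {a : ℕ}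
    (hM : IsCompletion (t + 1) m (O.erase a) M) :
    (∀ q ∈ M, ¬ RightCrossing (a, t + 1) q) ↔ ∀ x ∈ O, x ≤ a := by
  constructor
  · intro h x hx
    by_contra! hax
    obtain ⟨q, ⟨hq, hqx⟩, -⟩ := hM.1.2 x (mem_union_left _ (mem_erase.2 ⟨hax.ne', hx⟩))
    have hq2 := hM.2 q hq
    have hxt := hO x hx
    have hq1 : q.1 = x := by omega
    exact h q hq ⟨by dsimp; omega, by dsimp; omega, by dsimp; omega⟩
  · rintro h q hq ⟨h1, h2, -⟩
    dsimp only at h1 h2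
    rcases mem_union.1 (hM.1.1 q hq).2.1 with hq1 | hq1
    · have := h _ (mem_of_mem_erase hq1); omega
    · rw [mem_Icc] at hq1; omega

lemma IsCompletion.pow_noRightCrossingCount_insert {R : Type*} [Monoid R] (c : R)
    (hO : ∀ x ∈ O, x ≤ t) {a : ℕ} (hM : IsCompletion (t + 1) m (O.erase a) M) :
    c ^ noRightCrossingCount (insert (a, t + 1) M) =
      (if ∀ x ∈ O, x ≤ a then c else 1) * c ^ noRightCrossingCount M := by
  have hlater : ∀ p ∈ M, ¬ RightCrossing p (a, t + 1) := fun p hp h => by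
    have := hM.2 p hp
    exact absurd h.2.2 (by dsimp; omega)
  rw [noRightCrossingCount_insert (hM.notMem_pair a) hlater,
    if_congr (hM.forall_not_rightCrossing_iff hO) rfl rfl]
  split_ifs
  · rw [pow_succ']
  · rw [add_zero, one_mul]

end Completion

theorem sum_completions_eq_pathsum (c : ℝ) (m t : ℕ) (O : Finset ℕ) (hO : ∀ x ∈ O, x ≤ t) :
    ∑ M ∈ completions t m O, c ^ noRightCrossingCount M = pathsum c m #O := by
  induction m generalizing t O with
  | zero =>
    rw [completions_zero hO]
    split_ifs with h
    · simp [h, noRightCrossingCount, pathsum]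
    · obtain ⟨k, hk⟩ := Nat.exists_eq_succ_of_ne_zero (card_ne_zero.2 (nonempty_iff_ne_empty.2 h))
      simp [hk, pathsum]
  | succ m ih =>
    have hopen : ∀ x ∈ insert (t + 1) O, x ≤ t + 1 := by
      simp only [forall_mem_insert, le_refl, true_and]
      exact fun x hx => Nat.le_succ_of_le (hO x hx)
    have hclose : ∀ a ∈ O, ∑ M ∈ completions (t + 1) m (O.erase a),
        c ^ noRightCrossingCount (insert (a, t + 1) M) =
          (if ∀ x ∈ O, x ≤ a then c else 1) * pathsum c m (#O - 1) := by
      intro a ha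
      rw [sum_congr rfl fun M hM =>
          (mem_completions.1 hM).pow_noRightCrossingCount_insert c hO, ← mul_sum,
        ih (t + 1) (O.erase a) fun x hx => Nat.le_succ_of_le (hO x (mem_of_mem_erase hx)),
        card_erase_of_mem ha]
    rw [sum_completions_succ _ hO, ih (t + 1) _ hopen,
      card_insert_of_notMem fun h => by have := hO _ h; omega, sum_congr rfl hclose, ← sum_mul]
    rcases O.eq_empty_or_nonempty with rfl | hne
    · simp [pathsum]
    · obtain ⟨k, hk⟩ := Nat.exists_eq_succ_of_ne_zero (card_ne_zero.2 hne)
      rw [sum_ite_forall_le hne, hk, pathsum, Nat.succ_sub_one]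
      ring

/-- `μ_{2n}(c)` equals the sum over complete matchings of `{1,…,2n}` of
`c` raised to the number of edges with no right crossing. -/
theorem moments_eq_noRightCrossing_gf (c : ℝ) (n : ℕ) :
    mu c (2 * n) = ∑ M ∈ matchings n, c ^ noRightCrossingCount M := by
  rw [matchings_eq_completions, sum_completions_eq_pathsum c (2 * n) 0 ∅ (by simp)]
  rfl
end

section
/- The associated Hermite polynomial at shifted parameter expands in ordinary Hermite polynomials: H_n(x;c+1) = Σ_{k≥0} (−1)^k·(c)_k·binom(n−k,k)·H_{n−2k}(x), where (c)_k = c(c+1)⋯(c+k−1). -/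
open Finset Polynomial

attribute [local instance] Classical.propDecidable

noncomputable def aH (c : ℝ) : ℕ → Polynomial ℝ
  | 0 => 1
  | 1 => Polynomial.X
  | n + 2 => Polynomial.X * aH c (n + 1) - Polynomial.C ((n : ℝ) + c) * aH c n

noncomputable def ordH : ℕ → Polynomial ℝ
  | 0 => 1
  | 1 => Polynomial.X
  | n + 2 => Polynomial.X * ordH (n + 1) - Polynomial.C ((n : ℝ) + 1) * ordH n

/-- Rising factorial `(a)_k = a(a+1)⋯(a+k-1)`. -/
def rising (a : ℝ) (k : ℕ) : ℝ := ∏ i ∈ Finset.range k, (a + i)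

/-!
Both sides satisfy the three-term recurrence of `H_n(x; c+1)` with the same initial values.
For the right-hand side, `x H_m = H_{m+1} + m H_{m-1}` turns the recurrence into the identity
`A(n+2,k+1) - A(n+1,k+1) = (n+1-2k) A(n+1,k) - (n+1+c) A(n,k)` for `A = assocCoeff c`, which
after writing `n = 2k + j` reduces to Pascal's rule and
`(j+1) binom(k+j+1,k) = (k+j+1) binom(k+j,k)`.
-/

lemma rising_succ (a : ℝ) (k : ℕ) : rising a (k + 1) = rising a k * (a + k) :=
  prod_range_succ _ _

lemma aH_eq_of_recurrence (c : ℝ) (f : ℕ → ℝ[X]) (h0 : f 0 = 1) (h1 : f 1 = X)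
    (hrec : ∀ n, f (n + 2) = X * f (n + 1) - C ((n : ℝ) + c) * f n) : aH c = f := by
  funext n
  induction n using Nat.twoStepInduction with
  | zero => exact h0.symm
  | one => exact h1.symm
  | more n ih₀ ih₁ => rw [hrec, ← ih₀, ← ih₁, aH]

lemma X_mul_ordH (m : ℕ) : X * ordH m = ordH (m + 1) + C (m : ℝ) * ordH (m - 1) := by
  cases m with
  | zero => simp [ordH]
  | succ j => simp only [ordH, Nat.add_sub_cancel]; push_cast; ring

noncomputable def assocCoeff (c : ℝ) (n k : ℕ) : ℝ :=
  (-1) ^ k * rising c k * ((n - k).choose k : ℝ)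

lemma assocCoeff_zero_right (c : ℝ) (n : ℕ) : assocCoeff c n 0 = 1 := by
  simp [assocCoeff, rising]

lemma assocCoeff_eq_zero {c : ℝ} {n k : ℕ} (h : n < 2 * k) : assocCoeff c n k = 0 := by
  simp [assocCoeff, Nat.choose_eq_zero_of_lt (show n - k < k by omega)]

lemma assocCoeff_recurrence (c : ℝ) (n k : ℕ) :
    assocCoeff c (n + 2) (k + 1) - assocCoeff c (n + 1) (k + 1) =
      assocCoeff c (n + 1) k * ((n + 1 - 2 * k : ℕ) : ℝ) - ((n : ℝ) + 1 + c) * assocCoeff c n k := by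
  rcases lt_or_ge n (2 * k) with hn | hn
  · rw [assocCoeff_eq_zero (by omega), assocCoeff_eq_zero (by omega), assocCoeff_eq_zero hn,
      Nat.sub_eq_zero_of_le (by omega : n + 1 ≤ 2 * k)]
    simp
  obtain ⟨j, rfl⟩ : ∃ j, n = 2 * k + j := ⟨n - 2 * k, by omega⟩
  have pascal : ((k + j + 1).choose (k + 1) : ℝ) = (k + j).choose k + (k + j).choose (k + 1) := by
    exact_mod_cast Nat.choose_succ_succ' (k + j) k
  have absorb : ((k + j).choose k : ℝ) * (k + j + 1) = (k + j + 1).choose k * (j + 1) := by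
    have := Nat.choose_mul_succ_eq (k + j) k
    rw [show k + j + 1 - k = j + 1 by omega] at this
    exact_mod_cast this
  simp only [assocCoeff, rising_succ, show 2 * k + j + 2 - (k + 1) = k + j + 1 by omega,
    show 2 * k + j + 1 - (k + 1) = k + j by omega, show 2 * k + j + 1 - k = k + j + 1 by omega,
    show 2 * k + j - k = k + j by omega, show 2 * k + j + 1 - 2 * k = j + 1 by omega, pascal]
  push_cast
  linear_combination (-1 : ℝ) ^ k * rising c k * absorb

noncomputable def hermiteExpansion (c : ℝ) (n : ℕ) : ℝ[X] :=
  ∑ k ∈ range (n / 2 + 1), C (assocCoeff c n k) * ordH (n - 2 * k)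

lemma hermiteExpansion_eq_sum_range (c : ℝ) {n m : ℕ} (h : n / 2 < m) :
    hermiteExpansion c n = ∑ k ∈ range m, C (assocCoeff c n k) * ordH (n - 2 * k) := by
  refine sum_subset (range_subset_range.mpr h) fun k _ hk => ?_
  rw [mem_range, not_lt] at hk
  rw [assocCoeff_eq_zero (by omega), C_0, zero_mul]

lemma X_mul_expansionTerm (c : ℝ) (n k : ℕ) :
    X * (C (assocCoeff c (n + 1) k) * ordH (n + 1 - 2 * k)) =
      C (assocCoeff c (n + 1) k) * ordH (n + 2 - 2 * k) +
        C (assocCoeff c (n + 1) k * ((n + 1 - 2 * k : ℕ) : ℝ)) * ordH (n - 2 * k) := by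
  rcases lt_or_ge (n + 1) (2 * k) with hk | hk
  · simp [assocCoeff_eq_zero hk]
  rw [mul_left_comm, X_mul_ordH, show n + 1 - 2 * k + 1 = n + 2 - 2 * k by omega,
    show n + 1 - 2 * k - 1 = n - 2 * k by omega, C_mul]
  ring

lemma hermiteExpansion_succ_succ (c : ℝ) (n : ℕ) :
    hermiteExpansion c (n + 2) =
      X * hermiteExpansion c (n + 1) - C ((n : ℝ) + (c + 1)) * hermiteExpansion c n := by
  set a : ℕ → ℕ → ℝ := assocCoeff c
  have top : ∑ k ∈ range (n + 3), C (a (n + 2) k - a (n + 1) k) * ordH (n + 2 - 2 * k) =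
      ∑ k ∈ range (n + 2), C (a (n + 2) (k + 1) - a (n + 1) (k + 1)) * ordH (n - 2 * k) := by
    rw [sum_range_succ']
    simp only [a, assocCoeff_zero_right, sub_self, C_0, zero_mul, add_zero,
      show ∀ k, n + 2 - 2 * (k + 1) = n - 2 * k by omega]
  have bottom : ∑ k ∈ range (n + 3),
        C (a (n + 1) k * ((n + 1 - 2 * k : ℕ) : ℝ) - ((n : ℝ) + 1 + c) * a n k) * ordH (n - 2 * k) =
      ∑ k ∈ range (n + 2),
        C (a (n + 1) k * ((n + 1 - 2 * k : ℕ) : ℝ) - ((n : ℝ) + 1 + c) * a n k) * ordH (n - 2 * k) := by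
    rw [sum_range_succ]
    simp [a, assocCoeff_eq_zero (show n + 1 < 2 * (n + 2) by omega),
      assocCoeff_eq_zero (show n < 2 * (n + 2) by omega)]
  rw [← sub_eq_zero]
  calc hermiteExpansion c (n + 2) - (X * hermiteExpansion c (n + 1) -
        C ((n : ℝ) + (c + 1)) * hermiteExpansion c n)
      = ∑ k ∈ range (n + 3), C (a (n + 2) k - a (n + 1) k) * ordH (n + 2 - 2 * k) -
          ∑ k ∈ range (n + 3), C (a (n + 1) k * ((n + 1 - 2 * k : ℕ) : ℝ) -
            ((n : ℝ) + 1 + c) * a n k) * ordH (n - 2 * k) := by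
        rw [hermiteExpansion_eq_sum_range c (m := n + 3) (by omega),
          hermiteExpansion_eq_sum_range c (m := n + 3) (by omega),
          hermiteExpansion_eq_sum_range c (m := n + 3) (by omega), mul_sum, mul_sum,
          show (n : ℝ) + (c + 1) = n + 1 + c by ring]
        simp only [a, X_mul_expansionTerm, C_sub, C_mul, sub_mul, mul_assoc, sum_sub_distrib,
          sum_add_distrib]
        abel
    _ = 0 := by
        rw [top, bottom, sub_eq_zero]
        exact sum_congr rfl fun k _ => by rw [assocCoeff_recurrence]

/-- `H_n(x;c+1) = Σ_k (−1)^k (c)_k binom(n−k,k) H_{n−2k}(x)`. -/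
theorem assocHermite_expansion_in_hermite (n : ℕ) (c : ℝ) :
    aH (c + 1) n =
      ∑ k ∈ Finset.range (n / 2 + 1),
        Polynomial.C ((-1 : ℝ) ^ k * rising c k * ((n - k).choose k : ℝ)) * ordH (n - 2 * k) := by
  rw [aH_eq_of_recurrence (c + 1) (hermiteExpansion c) ?_ ?_ (hermiteExpansion_succ_succ c)]
  · rfl
  · simp [hermiteExpansion, assocCoeff_zero_right, ordH]
  · simp [hermiteExpansion, assocCoeff_zero_right, ordH]
end
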